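/- (Mirror-descent descent inequality toward the minimizer.) Let f : ℝ^d → ℝ be convex, differentiable, and L_f-strongly smooth, achieving its minimum at z* ∈ S where S ⊆ ℝ^d is convex. Let ψ be differentiable and σ-strongly convex with Bregman distance D_ψ, let η > 0, and let z⁺ ∈ S satisfy the variational optimality condition ⟨η ∇f(z) + ∇ψ(z⁺) − ∇ψ(z), w − z⁺⟩ ≥ 0 for all w ∈ S (i.e., z⁺ is the mirror-descent update of z ∈ S). Then D_ψ(z*, z⁺) ≤ D_ψ(z*, z) + (1/2)(η L_f − σ)‖z⁺ − z‖². -/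

import Mathlib

/-! The three-point identity for the Bregman divergence turns the optimality condition, tested
at `w = z*`, into `D(z*, z⁺) ≤ D(z*, z) - D(z⁺, z) + η ⟪∇f(z), z* - z⁺⟫`. Convexity of `f` at `z`,
smoothness from `z` to `z⁺` and `f(z*) ≤ f(z⁺)` bound the inner product by `(L_f/2) ‖z⁺ - z‖²`,
and strong convexity of `ψ` bounds `D(z⁺, z)` below by `(σ/2) ‖z⁺ - z‖²`. -/

open scoped RealInnerProductSpace

open Set AffineMap

theorem ConvexOn.add_fderiv_le {E : Type*} [NormedAddCommGroup E] [NormedSpace ℝ E]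
    {s : Set E} {f : E → ℝ} {f' : E →L[ℝ] ℝ} {x y : E}
    (hf : ConvexOn ℝ s f) (hx : x ∈ s) (hy : y ∈ s) (hf' : HasFDerivAt f f' x) :
    f x + f' (y - x) ≤ f y := by
  have hline : ConvexOn ℝ (lineMap x y ⁻¹' s) (f ∘ lineMap (k := ℝ) x y) :=
    hf.comp_affineMap (lineMap x y)
  have hderiv : HasDerivAt (f ∘ lineMap (k := ℝ) x y) (f' (y - x)) 0 := by
    refine HasFDerivAt.comp_hasDerivAt (0 : ℝ) ?_ hasDerivAt_lineMap
    simpa using hf'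
  have := hline.le_slope_of_hasDerivAt (by simpa using hx) (by simpa using hy) one_pos hderiv
  simp only [slope_def_field, Function.comp_apply, lineMap_apply_one, lineMap_apply_zero,
    sub_zero, div_one] at this
  linarith

section InnerProductSpace

variable {F : Type*} [NormedAddCommGroup F] [InnerProductSpace ℝ F]

theorem ConvexOn.add_inner_gradient_le [CompleteSpace F] {s : Set F} {f : F → ℝ} {g x y : F}
    (hf : ConvexOn ℝ s f) (hx : x ∈ s) (hy : y ∈ s) (hg : HasGradientAt f g x) :
    f x + ⟪g, y - x⟫ ≤ f y :=
  hf.add_fderiv_le hx hy (hasGradientAt_iff_hasFDerivAt.mp hg)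

theorem ConvexOn.inner_gradient_sub_le [CompleteSpace F] {s : Set F} {f : F → ℝ} {g x y w : F}
    {L : ℝ}
    (hf : ConvexOn ℝ s f) (hx : x ∈ s) (hw : w ∈ s) (hg : HasGradientAt f g x)
    (hsmooth : f y ≤ f x + ⟪g, y - x⟫ + L / 2 * ‖y - x‖ ^ 2) (hmin : f w ≤ f y) :
    ⟪g, w - y⟫ ≤ L / 2 * ‖y - x‖ ^ 2 := by
  have hconv := hf.add_inner_gradient_le hx hw hg
  have hsplit : ⟪g, w - y⟫ = ⟪g, w - x⟫ - ⟪g, y - x⟫ := by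
    rw [← inner_sub_right, sub_sub_sub_cancel_right]
  linarith

def bregmanDiv (ψ : F → ℝ) (ψ' : F → F) (x y : F) : ℝ := ψ x - ψ y - ⟪ψ' y, x - y⟫

theorem bregmanDiv_sub_add_bregmanDiv (ψ : F → ℝ) (ψ' : F → F) (x y z : F) :
    bregmanDiv ψ ψ' x y - bregmanDiv ψ ψ' x z + bregmanDiv ψ ψ' y z = ⟪ψ' z - ψ' y, x - y⟫ := by
  have hsplit : ⟪ψ' z, x - z⟫ = ⟪ψ' z, x - y⟫ + ⟪ψ' z, y - z⟫ := by
    rw [← inner_add_right, sub_add_sub_cancel]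
  simp only [bregmanDiv, inner_sub_left, hsplit]
  ring

theorem bregmanDiv_le_of_mirror_step {ψ : F → ℝ} {ψ' : F → F} {g x y w : F} {η : ℝ}
    (hopt : 0 ≤ ⟪η • g + ψ' y - ψ' x, w - y⟫) :
    bregmanDiv ψ ψ' w y ≤ bregmanDiv ψ ψ' w x - bregmanDiv ψ ψ' y x + η * ⟪g, w - y⟫ := by
  have hthree := bregmanDiv_sub_add_bregmanDiv ψ ψ' w y x
  simp only [inner_add_left, inner_sub_left, real_inner_smul_left] at hopt hthree
  linarith

end InnerProductSpace

theorem mirror_descent_toward_minimizer_general {d : ℕ}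
    (S : Set (EuclideanSpace ℝ (Fin d)))
    (f : EuclideanSpace ℝ (Fin d) → ℝ) (f' : EuclideanSpace ℝ (Fin d) → EuclideanSpace ℝ (Fin d))
    (hfconv : ConvexOn ℝ Set.univ f)
    (hf : ∀ x, HasGradientAt f (f' x) x)
    (Lf : ℝ)
    (hss : ∀ z₁ z₂ : EuclideanSpace ℝ (Fin d),
      f z₂ ≤ f z₁ + ⟪f' z₁, z₂ - z₁⟫ + (Lf / 2) * ‖z₂ - z₁‖ ^ 2)
    (zstar : EuclideanSpace ℝ (Fin d)) (hzstarS : zstar ∈ S)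
    (hmin : ∀ w, f zstar ≤ f w)
    (ψ : EuclideanSpace ℝ (Fin d) → ℝ) (ψ' : EuclideanSpace ℝ (Fin d) → EuclideanSpace ℝ (Fin d))
    (D : EuclideanSpace ℝ (Fin d) → EuclideanSpace ℝ (Fin d) → ℝ)
    (hD : ∀ z₁ z₂, D z₁ z₂ = ψ z₁ - ψ z₂ - ⟪ψ' z₂, z₁ - z₂⟫)
    (σ : ℝ)
    (hstrong : ∀ z₁ z₂ : EuclideanSpace ℝ (Fin d), (σ / 2) * ‖z₁ - z₂‖ ^ 2 ≤ D z₁ z₂)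
    (η : ℝ) (hη : 0 < η)
    (z zplus : EuclideanSpace ℝ (Fin d))
    (hopt : ∀ w ∈ S, (0 : ℝ) ≤ ⟪η • f' z + ψ' zplus - ψ' z, w - zplus⟫) :
    D zstar zplus ≤ D zstar z + (1 / 2) * (η * Lf - σ) * ‖zplus - z‖ ^ 2 := by
  obtain rfl : D = bregmanDiv ψ ψ' := by
    funext z₁ z₂
    exact hD z₁ z₂
  have hstep := bregmanDiv_le_of_mirror_step (ψ := ψ) (hopt zstar hzstarS)
  have hgrad : ⟪f' z, zstar - zplus⟫ ≤ Lf / 2 * ‖zplus - z‖ ^ 2 :=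
    hfconv.inner_gradient_sub_le (mem_univ z) (mem_univ zstar) (hf z) (hss z zplus) (hmin zplus)
  have hmove := hstrong zplus z
  linarith [mul_le_mul_of_nonneg_left hgrad hη.le]

/-- Mirror-descent descent inequality toward the minimizer. -/
theorem mirror_descent_toward_minimizer {d : ℕ}
    (S : Set (EuclideanSpace ℝ (Fin d))) (hS : Convex ℝ S)
    (f : EuclideanSpace ℝ (Fin d) → ℝ) (f' : EuclideanSpace ℝ (Fin d) → EuclideanSpace ℝ (Fin d))
    (hfconv : ConvexOn ℝ Set.univ f)
    (hf : ∀ x, HasGradientAt f (f' x) x)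
    (Lf : ℝ) (hLf : 0 < Lf)
    (hss : ∀ z₁ z₂ : EuclideanSpace ℝ (Fin d),
      f z₂ ≤ f z₁ + ⟪f' z₁, z₂ - z₁⟫ + (Lf / 2) * ‖z₂ - z₁‖ ^ 2)
    (zstar : EuclideanSpace ℝ (Fin d)) (hzstarS : zstar ∈ S)
    (hmin : ∀ w, f zstar ≤ f w)
    (ψ : EuclideanSpace ℝ (Fin d) → ℝ) (ψ' : EuclideanSpace ℝ (Fin d) → EuclideanSpace ℝ (Fin d))
    (hψ : ∀ x, HasGradientAt ψ (ψ' x) x)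
    (D : EuclideanSpace ℝ (Fin d) → EuclideanSpace ℝ (Fin d) → ℝ)
    (hD : ∀ z₁ z₂, D z₁ z₂ = ψ z₁ - ψ z₂ - ⟪ψ' z₂, z₁ - z₂⟫)
    (σ : ℝ) (hσ : 0 < σ)
    (hstrong : ∀ z₁ z₂ : EuclideanSpace ℝ (Fin d), (σ / 2) * ‖z₁ - z₂‖ ^ 2 ≤ D z₁ z₂)
    (η : ℝ) (hη : 0 < η)
    (z zplus : EuclideanSpace ℝ (Fin d)) (hz : z ∈ S) (hzplus : zplus ∈ S)
    (hopt : ∀ w ∈ S, (0 : ℝ) ≤ ⟪η • f' z + ψ' zplus - ψ' z, w - zplus⟫) :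
    D zstar zplus ≤ D zstar z + (1 / 2) * (η * Lf - σ) * ‖zplus - z‖ ^ 2 :=
  mirror_descent_toward_minimizer_general S f f' hfconv hf Lf hss zstar hzstarS hmin ψ ψ' D hD σ
    hstrong η hη z zplus hopt
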